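/- arXiv:1602.07850 — 2 statements merged into one kernel-verified Lean document; each statement's English description precedes it below -/
import Mathlib

section
/- For every fixed n >= 1 and every integer m >= 2, the normalized sums F(2n, q^m) = (sum_{j=0}^{2n} (-1)^j q^{mj} (2n choose j)_q) / (q;q^2)_n satisfy the Chebyshev-type recurrence F(2n, q^m) = (1 + q^{m-1}) F(2n, q^{m-1}) - q^{m-1} q^{2n} F(2n, q^{m-2}), with F(2n, q^0) = 1 and F(2n, q^1) = 1. -/
open Finset

/-- Gaussian (q-)binomial coefficient, defined over any commutative ring by the
Pascal-type recurrence `[n+1, k+1] = [n, k] + q^(k+1) * [n, k+1]`. -/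
def qbinom {R : Type*} [CommRing R] (q : R) : ℕ → ℕ → R
  | _, 0 => 1
  | 0, _ + 1 => 0
  | n + 1, k + 1 => qbinom q n k + q ^ (k + 1) * qbinom q n (k + 1)
/-- Normalized even Rogers-Szegő polynomial
`F(2n, s) = (∑_{j=0}^{2n} (-s)^j [2n, j]_q) / (q; q^2)_n` in the field ℚ(q). -/
noncomputable def Feven (n : ℕ) (s : RatFunc ℚ) : RatFunc ℚ :=
  (∑ j ∈ Finset.range (2 * n + 1), (-s) ^ j * qbinom RatFunc.X (2 * n) j) /
    ∏ i ∈ Finset.range n, (1 - RatFunc.X ^ (2 * i + 1))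

/-!
With the Rogers–Szegő polynomial `H_N(x) = ∑_j [N, j]_q x^j`, `F(2n, s) = H_{2n}(-s) / (q; q²)_n`.
The Pascal rule gives `H_{N+1}(x) = H_N(qx) + x H_N(x)`, and induction on `N` gives the companion
`H_{N+1}(qx) = H_N(qx) + q^(N+1) x H_N(x)`. Eliminating `H_{N+1}(qx)` between the two yields
`H_N(q²x) = (1 - qx) H_N(qx) + q^(N+1) x H_N(x)`, which at `x = -q^k` is the recurrence.
The same two rules show `H_{2n+2}(-1) = H_{2n+2}(-q) = (1 - q^(2n+1)) H_{2n}(-1)` as long as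
`H_{2n}(-1) = H_{2n}(-q)`: this is Gauss's evaluation `H_{2n}(-1) = H_{2n}(-q) = (q; q²)_n`,
i.e. the two initial values.
-/

section RogersSzego

variable {R : Type*} [CommRing R] (q : R)

theorem qbinom_eq_zero_of_lt : ∀ {n k : ℕ}, n < k → qbinom q n k = 0
  | 0, _ + 1, _ => rfl
  | n + 1, k + 1, h => by
    rw [qbinom, qbinom_eq_zero_of_lt (by omega), qbinom_eq_zero_of_lt (by omega), mul_zero,
      add_zero]

def rogersSzego (N : ℕ) (x : R) : R :=
  ∑ j ∈ range (N + 1), x ^ j * qbinom q N j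

theorem rogersSzego_zero (x : R) : rogersSzego q 0 x = 1 := by
  simp [rogersSzego, qbinom]

theorem rogersSzego_succ (N : ℕ) (x : R) :
    rogersSzego q (N + 1) x = rogersSzego q N (q * x) + x * rogersSzego q N x := by
  have hshift : ∑ j ∈ range (N + 1), x ^ (j + 1) * qbinom q N j = x * rogersSzego q N x := by
    rw [rogersSzego, mul_sum]
    exact sum_congr rfl fun j _ => by ring
  have htail : ∑ j ∈ range (N + 1), x ^ (j + 1) * (q ^ (j + 1) * qbinom q N (j + 1)) =
      rogersSzego q N (q * x) - 1 := by
    rw [rogersSzego, sum_range_succ' (fun j => (q * x) ^ j * qbinom q N j), sum_range_succ,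
      qbinom_eq_zero_of_lt q N.lt_succ_self]
    simp only [qbinom, pow_zero, mul_one, mul_zero, add_zero, add_sub_cancel_right, mul_pow]
    exact sum_congr rfl fun j _ => by ring
  rw [rogersSzego, sum_range_succ']
  simp only [qbinom, mul_add, sum_add_distrib, hshift, htail, pow_zero, mul_one]
  ring

theorem rogersSzego_succ_mul : ∀ (N : ℕ) (x : R),
    rogersSzego q (N + 1) (q * x) = rogersSzego q N (q * x) + q ^ (N + 1) * x * rogersSzego q N x
  | 0, x => by
    simp only [rogersSzego_succ, rogersSzego_zero]
    ring
  | N + 1, x => by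
    have ih_qx := rogersSzego_succ_mul N (q * x)
    have ih_x := rogersSzego_succ_mul N x
    linear_combination rogersSzego_succ q (N + 1) (q * x) + ih_qx + q * x * ih_x -
      rogersSzego_succ q N (q * x) - q ^ (N + 2) * x * rogersSzego_succ q N x

theorem rogersSzego_mul_sq (N : ℕ) (x : R) :
    rogersSzego q N (q ^ 2 * x) =
      (1 - q * x) * rogersSzego q N (q * x) + q ^ (N + 1) * x * rogersSzego q N x := by
  rw [sq, mul_assoc]
  linear_combination rogersSzego_succ_mul q N x - rogersSzego_succ q N (q * x)

theorem rogersSzego_neg_pow_add_two (N k : ℕ) :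
    rogersSzego q N (-q ^ (k + 2)) =
      (1 + q ^ (k + 1)) * rogersSzego q N (-q ^ (k + 1)) -
        q ^ (k + 1) * q ^ N * rogersSzego q N (-q ^ k) := by
  have h := rogersSzego_mul_sq q N (-q ^ k)
  rw [show q ^ 2 * -q ^ k = -q ^ (k + 2) by ring, show q * -q ^ k = -q ^ (k + 1) by ring] at h
  linear_combination h

theorem rogersSzego_two_mul_neg_one_and_neg_self : ∀ n : ℕ,
    rogersSzego q (2 * n) (-1) = ∏ i ∈ range n, (1 - q ^ (2 * i + 1)) ∧
      rogersSzego q (2 * n) (-q) = ∏ i ∈ range n, (1 - q ^ (2 * i + 1))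
  | 0 => by simp [rogersSzego_zero]
  | n + 1 => by
    obtain ⟨ih_one, ih_q⟩ := rogersSzego_two_mul_neg_one_and_neg_self n
    have h_odd_one := rogersSzego_succ q (2 * n) (-1)
    have h_odd_q := rogersSzego_succ_mul q (2 * n) (-1)
    rw [mul_neg_one] at h_odd_one h_odd_q
    rw [show 2 * (n + 1) = 2 * n + 1 + 1 by ring, prod_range_succ]
    constructor
    · rw [rogersSzego_succ, mul_neg_one, h_odd_one, h_odd_q, ih_one, ih_q]
      ring
    · have h_even_q := rogersSzego_succ_mul q (2 * n + 1) (-1)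
      rw [mul_neg_one] at h_even_q
      rw [h_even_q, h_odd_one, h_odd_q, ih_one, ih_q]
      ring

end RogersSzego

theorem RatFunc.one_sub_X_pow_ne_zero {K : Type*} [Field K] {k : ℕ} (hk : 0 < k) :
    (1 - RatFunc.X ^ k : RatFunc K) ≠ 0 := by
  rw [← neg_ne_zero, neg_sub, ← RatFunc.algebraMap_X, ← map_pow,
    ← map_one (algebraMap (Polynomial K) (RatFunc K)), ← map_sub, ← Polynomial.C_1]
  exact RatFunc.algebraMap_ne_zero (Polynomial.X_pow_sub_C_ne_zero hk 1)

theorem Feven_eq (n : ℕ) (s : RatFunc ℚ) :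
    Feven n s =
      rogersSzego RatFunc.X (2 * n) (-s) / ∏ i ∈ range n, (1 - RatFunc.X ^ (2 * i + 1)) :=
  rfl

theorem stmt18_general (n : ℕ) (m : ℕ) (hm : 2 ≤ m) :
    Feven n (RatFunc.X ^ m) =
      (1 + RatFunc.X ^ (m - 1)) * Feven n (RatFunc.X ^ (m - 1)) -
        RatFunc.X ^ (m - 1) * RatFunc.X ^ (2 * n) * Feven n (RatFunc.X ^ (m - 2)) ∧
    Feven n (RatFunc.X ^ 0) = 1 ∧ Feven n (RatFunc.X ^ 1) = 1 := by
  obtain ⟨k, rfl⟩ : ∃ k, m = k + 2 := ⟨m - 2, by omega⟩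
  have hden : ∏ i ∈ range n, (1 - RatFunc.X ^ (2 * i + 1) : RatFunc ℚ) ≠ 0 :=
    prod_ne_zero_iff.mpr fun i _ => RatFunc.one_sub_X_pow_ne_zero (2 * i).succ_pos
  obtain ⟨hgauss_one, hgauss_q⟩ :=
    rogersSzego_two_mul_neg_one_and_neg_self (RatFunc.X : RatFunc ℚ) n
  refine ⟨?_, ?_, ?_⟩
  · rw [Nat.add_sub_cancel, show k + 2 - 1 = k + 1 from rfl, Feven_eq, Feven_eq, Feven_eq,
      rogersSzego_neg_pow_add_two]
    ring
  · rw [Feven_eq, pow_zero, hgauss_one, div_self hden]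
  · rw [Feven_eq, pow_one, hgauss_q, div_self hden]

theorem stmt18 (n : ℕ) (hn : 1 ≤ n) (m : ℕ) (hm : 2 ≤ m) :
    Feven n (RatFunc.X ^ m) =
      (1 + RatFunc.X ^ (m - 1)) * Feven n (RatFunc.X ^ (m - 1)) -
        RatFunc.X ^ (m - 1) * RatFunc.X ^ (2 * n) * Feven n (RatFunc.X ^ (m - 2)) ∧
    Feven n (RatFunc.X ^ 0) = 1 ∧ Feven n (RatFunc.X ^ 1) = 1 :=
  stmt18_general n m hm
end

section
/- For positive integers k and nonnegative integers m, n: the limit as q tends to 1 of (sum_{j=0}^{2n} (-1)^j q^{mj} (2n choose j)_{q^k}) / (q;q^2)_n equals k^n, and the limit as q tends to 1 of (sum_{j=0}^{2n+1} (-1)^j q^{mj} (2n+1 choose j)_{q^k}) / (q;q^2)_{n+1} equals m * k^n. -/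
/-!
Write `S_N(x) = ∑_j (-x)^j [N, j]_Q`. Combining the two Pascal rules for Gaussian binomials
gives the three-term recurrence `S_{N+2} = (1 - x) S_{N+1} + (1 - Q^(N+1)) x S_N`. For
`x = q^m`, `Q = q^k`, dividing by `(q; q²)_n` turns it into a recurrence for the even and odd
normalized sums whose coefficients are built from `1 - q^m → 0`, `q^m → 1` and quotients
`(1 - q^a) / (1 - q^b) → a / b`; induction on `n` then yields the limits `k^n` and `m k^n`.
-/

open Finset

open Filter Topology

section Algebra

variable {R : Type*} [CommRing R]

@[simp]
lemma qbinom_zero_right (q : R) (n : ℕ) : qbinom q n 0 = 1 := by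
  cases n <;> rfl

@[simp]
lemma qbinom_zero_succ (q : R) (j : ℕ) : qbinom q 0 (j + 1) = 0 := rfl

lemma qbinom_succ_succ (q : R) (n j : ℕ) :
    qbinom q (n + 1) (j + 1) = qbinom q n j + q ^ (j + 1) * qbinom q n (j + 1) := rfl

lemma qbinom_eq_zero_of_lt_s19 (q : R) {n j : ℕ} (h : n < j) : qbinom q n j = 0 := by
  induction n generalizing j with
  | zero => obtain ⟨j, rfl⟩ := Nat.exists_eq_add_one_of_ne_zero (by omega : j ≠ 0); rfl
  | succ n ih =>
    obtain ⟨j, rfl⟩ := Nat.exists_eq_add_one_of_ne_zero (by omega : j ≠ 0)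
    rw [qbinom_succ_succ, ih (by omega), ih (by omega), mul_zero, add_zero]

/-- The second Pascal rule `[n+1, j+1] = q^(n-j) [n, j] + [n, j+1]`, multiplied by `q^(j+1)`
so that no truncated subtraction occurs. -/
lemma pow_mul_qbinom_succ_succ (q : R) (n j : ℕ) :
    q ^ (j + 1) * qbinom q (n + 1) (j + 1) =
      q ^ (n + 1) * qbinom q n j + q ^ (j + 1) * qbinom q n (j + 1) := by
  induction n generalizing j with
  | zero => cases j <;> simp [qbinom_succ_succ]
  | succ n ih =>
    cases j with
    | zero =>
      have h₁ := qbinom_succ_succ q (n + 1) 0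
      have h₀ := qbinom_succ_succ q n 0
      have ih₀ := ih 0
      simp only [qbinom_zero_right, zero_add, mul_one] at h₁ h₀ ih₀ ⊢
      linear_combination q * h₁ + q * ih₀ - q * h₀
    | succ j =>
      linear_combination q ^ (j + 2) * qbinom_succ_succ q (n + 1) (j + 1) + q * ih j
        + q ^ (j + 2) * ih (j + 1) - q ^ (n + 2) * qbinom_succ_succ q n j
        - q ^ (j + 2) * qbinom_succ_succ q n (j + 1)

def altQBinomSum (q x : R) (N : ℕ) : R :=
  ∑ j ∈ range (N + 1), (-x) ^ j * qbinom q N j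

lemma altQBinomSum_zero (q x : R) : altQBinomSum q x 0 = 1 := by
  simp [altQBinomSum]

lemma altQBinomSum_succ_eq_one_add (q x : R) (N : ℕ) :
    altQBinomSum q x (N + 1) =
      1 + ∑ j ∈ range (N + 1), (-x) ^ (j + 1) * qbinom q (N + 1) (j + 1) := by
  rw [altQBinomSum, sum_range_succ']
  simp [add_comm]

lemma altQBinomSum_eq_one_add (q x : R) (N : ℕ) :
    altQBinomSum q x N = 1 + ∑ j ∈ range (N + 1), (-x) ^ (j + 1) * qbinom q N (j + 1) := by
  rw [sum_range_succ, qbinom_eq_zero_of_lt_s19 q (Nat.lt_succ_self N), mul_zero, add_zero]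
  cases N with
  | zero => simp [altQBinomSum]
  | succ N => simpa using altQBinomSum_succ_eq_one_add q x N

lemma altQBinomSum_succ (q x : R) (N : ℕ) :
    altQBinomSum q x (N + 1) = altQBinomSum q (q * x) N - x * altQBinomSum q x N := by
  have key : ∀ j ∈ range (N + 1), (-x) ^ (j + 1) * qbinom q (N + 1) (j + 1) =
      -x * ((-x) ^ j * qbinom q N j) + (-(q * x)) ^ (j + 1) * qbinom q N (j + 1) := by
    intro j _
    rw [qbinom_succ_succ]
    ring
  rw [altQBinomSum_succ_eq_one_add, sum_congr rfl key, sum_add_distrib, ← mul_sum,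
    altQBinomSum_eq_one_add q (q * x), altQBinomSum]
  ring

lemma altQBinomSum_succ_mul (q x : R) (N : ℕ) :
    altQBinomSum q (q * x) (N + 1) =
      altQBinomSum q (q * x) N - q ^ (N + 1) * x * altQBinomSum q x N := by
  have key : ∀ j ∈ range (N + 1), (-(q * x)) ^ (j + 1) * qbinom q (N + 1) (j + 1) =
      -(q ^ (N + 1) * x) * ((-x) ^ j * qbinom q N j) +
        (-(q * x)) ^ (j + 1) * qbinom q N (j + 1) := by
    intro j _
    linear_combination (-x) ^ (j + 1) * pow_mul_qbinom_succ_succ q N j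
  rw [altQBinomSum_succ_eq_one_add, sum_congr rfl key, sum_add_distrib, ← mul_sum,
    altQBinomSum_eq_one_add q (q * x), altQBinomSum]
  ring

lemma altQBinomSum_succ_succ (q x : R) (N : ℕ) :
    altQBinomSum q x (N + 2) =
      (1 - x) * altQBinomSum q x (N + 1) + (1 - q ^ (N + 1)) * x * altQBinomSum q x N := by
  linear_combination altQBinomSum_succ q x (N + 1) + altQBinomSum_succ_mul q x N
    - altQBinomSum_succ q x N

end Algebra

def oddQPochhammer {R : Type*} [CommRing R] (q : R) (n : ℕ) : R :=
  ∏ i ∈ range n, (1 - q ^ (2 * i + 1))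

lemma oddQPochhammer_succ {R : Type*} [CommRing R] (q : R) (n : ℕ) :
    oddQPochhammer q (n + 1) = oddQPochhammer q n * (1 - q ^ (2 * n + 1)) :=
  prod_range_succ _ n

section Field

variable {K : Type*} [Field K] (k m : ℕ)

lemma altQBinomSum_even_div_oddQPochhammer_succ (q : K) (n : ℕ) :
    altQBinomSum (q ^ k) (q ^ m) (2 * (n + 1)) / oddQPochhammer q (n + 1) =
      (1 - q ^ m) * (altQBinomSum (q ^ k) (q ^ m) (2 * n + 1) / oddQPochhammer q (n + 1)) +
        (1 - q ^ (k * (2 * n + 1))) / (1 - q ^ (2 * n + 1)) * q ^ m *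
          (altQBinomSum (q ^ k) (q ^ m) (2 * n) / oddQPochhammer q n) := by
  rw [show 2 * (n + 1) = 2 * n + 2 by ring, altQBinomSum_succ_succ, oddQPochhammer_succ,
    pow_mul]
  generalize 1 - q ^ (2 * n + 1) = d
  ring

lemma altQBinomSum_odd_div_oddQPochhammer_succ (q : K) (n : ℕ) :
    altQBinomSum (q ^ k) (q ^ m) (2 * (n + 1) + 1) / oddQPochhammer q (n + 2) =
      (1 - q ^ m) / (1 - q ^ (2 * (n + 1) + 1)) *
          (altQBinomSum (q ^ k) (q ^ m) (2 * (n + 1)) / oddQPochhammer q (n + 1)) +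
        (1 - q ^ (k * (2 * n + 2))) / (1 - q ^ (2 * (n + 1) + 1)) * q ^ m *
          (altQBinomSum (q ^ k) (q ^ m) (2 * n + 1) / oddQPochhammer q (n + 1)) := by
  rw [show 2 * (n + 1) + 1 = 2 * n + 1 + 2 by ring, altQBinomSum_succ_succ,
    oddQPochhammer_succ q (n + 1), pow_mul]
  generalize 1 - q ^ (2 * (n + 1) + 1) = d
  rw [show 2 * (n + 1) = 2 * n + 1 + 1 by ring]
  ring

end Field

section Limits

variable {𝕜 : Type*} [NormedField 𝕜]

lemma tendsto_pow_nhdsNE_one (m : ℕ) : Tendsto (fun q : 𝕜 => q ^ m) (𝓝[≠] 1) (𝓝 1) := by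
  simpa using ((continuous_pow m).tendsto (1 : 𝕜)).mono_left nhdsWithin_le_nhds

lemma tendsto_one_sub_pow_nhdsNE_one (m : ℕ) :
    Tendsto (fun q : 𝕜 => 1 - q ^ m) (𝓝[≠] 1) (𝓝 0) := by
  simpa using (tendsto_const_nhds (x := (1 : 𝕜))).sub (tendsto_pow_nhdsNE_one m)

lemma tendsto_one_sub_pow_div_one_sub_pow [CharZero 𝕜] (a : ℕ) {b : ℕ} (hb : b ≠ 0) :
    Tendsto (fun q : 𝕜 => (1 - q ^ a) / (1 - q ^ b)) (𝓝[≠] 1) (𝓝 ((a : 𝕜) / b)) := by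
  have geom (c : ℕ) : Tendsto (fun q : 𝕜 => ∑ i ∈ range c, q ^ i) (𝓝[≠] 1) (𝓝 (c : 𝕜)) := by
    simpa using ((continuous_finsetSum (range c) fun i _ => continuous_pow i).tendsto
      (1 : 𝕜)).mono_left nhdsWithin_le_nhds
  refine ((geom a).div (geom b) (Nat.cast_ne_zero.2 hb)).congr' ?_
  filter_upwards [self_mem_nhdsWithin] with q hq
  have hq : 1 - q ≠ 0 := sub_ne_zero.2 (Ne.symm hq)
  rw [← mul_neg_geom_sum, ← mul_neg_geom_sum, mul_div_mul_left _ _ hq, Pi.div_apply]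

theorem tendsto_altQBinomSum_div_oddQPochhammer [CharZero 𝕜] (k m n : ℕ) :
    Tendsto (fun q : 𝕜 => altQBinomSum (q ^ k) (q ^ m) (2 * n) / oddQPochhammer q n)
        (𝓝[≠] 1) (𝓝 ((k : 𝕜) ^ n)) ∧
      Tendsto (fun q : 𝕜 => altQBinomSum (q ^ k) (q ^ m) (2 * n + 1) / oddQPochhammer q (n + 1))
        (𝓝[≠] 1) (𝓝 ((m : 𝕜) * (k : 𝕜) ^ n)) := by
  induction n with
  | zero =>
    constructor
    · simpa [altQBinomSum_zero, oddQPochhammer] using tendsto_const_nhds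
    · simpa [altQBinomSum_succ, altQBinomSum_zero, oddQPochhammer] using
        tendsto_one_sub_pow_div_one_sub_pow (𝕜 := 𝕜) m one_ne_zero
  | succ n ih =>
    obtain ⟨h_even, h_odd⟩ := ih
    have h_even' : Tendsto (fun q : 𝕜 => altQBinomSum (q ^ k) (q ^ m) (2 * (n + 1)) /
        oddQPochhammer q (n + 1)) (𝓝[≠] 1) (𝓝 ((k : 𝕜) ^ (n + 1))) := by
      have h := ((tendsto_one_sub_pow_nhdsNE_one m).mul h_odd).add
        (((tendsto_one_sub_pow_div_one_sub_pow (k * (2 * n + 1)) (b := 2 * n + 1)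
          (by omega)).mul (tendsto_pow_nhdsNE_one m)).mul h_even)
      convert h using 2
      · exact altQBinomSum_even_div_oddQPochhammer_succ k m _ n
      · have : ((2 * n + 1 : ℕ) : 𝕜) ≠ 0 := Nat.cast_ne_zero.2 (by omega)
        field_simp
        push_cast
        ring
    refine ⟨h_even', ?_⟩
    have h := ((tendsto_one_sub_pow_div_one_sub_pow m (b := 2 * (n + 1) + 1)
      (by omega)).mul h_even').add (((tendsto_one_sub_pow_div_one_sub_pow (k * (2 * n + 2))
        (b := 2 * (n + 1) + 1) (by omega)).mul (tendsto_pow_nhdsNE_one m)).mul h_odd)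
    convert h using 2
    · exact altQBinomSum_odd_div_oddQPochhammer_succ k m _ n
    · have : ((2 * (n + 1) + 1 : ℕ) : 𝕜) ≠ 0 := Nat.cast_ne_zero.2 (by omega)
      field_simp
      push_cast
      ring

end Limits

theorem stmt19_general (k : ℕ) (m n : ℕ) :
    Filter.Tendsto
      (fun q : ℝ =>
        (∑ j ∈ Finset.range (2 * n + 1), (-1 : ℝ) ^ j * q ^ (m * j) * qbinom (q ^ k) (2 * n) j) /
          ∏ i ∈ Finset.range n, (1 - q ^ (2 * i + 1)))
      (𝓝[≠] (1 : ℝ)) (𝓝 ((k : ℝ) ^ n)) ∧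
    Filter.Tendsto
      (fun q : ℝ =>
        (∑ j ∈ Finset.range (2 * n + 2),
            (-1 : ℝ) ^ j * q ^ (m * j) * qbinom (q ^ k) (2 * n + 1) j) /
          ∏ i ∈ Finset.range (n + 1), (1 - q ^ (2 * i + 1)))
      (𝓝[≠] (1 : ℝ)) (𝓝 ((m : ℝ) * (k : ℝ) ^ n)) := by
  obtain ⟨h_even, h_odd⟩ := tendsto_altQBinomSum_div_oddQPochhammer (𝕜 := ℝ) k m n
  refine ⟨h_even.congr fun q => ?_, h_odd.congr fun q => ?_⟩ <;>
    exact congrArg (· / _) (sum_congr rfl fun j _ => by rw [neg_pow, pow_mul])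

theorem stmt19 (k : ℕ) (hk : 1 ≤ k) (m n : ℕ) :
    Filter.Tendsto
      (fun q : ℝ =>
        (∑ j ∈ Finset.range (2 * n + 1), (-1 : ℝ) ^ j * q ^ (m * j) * qbinom (q ^ k) (2 * n) j) /
          ∏ i ∈ Finset.range n, (1 - q ^ (2 * i + 1)))
      (𝓝[≠] (1 : ℝ)) (𝓝 ((k : ℝ) ^ n)) ∧
    Filter.Tendsto
      (fun q : ℝ =>
        (∑ j ∈ Finset.range (2 * n + 2),
            (-1 : ℝ) ^ j * q ^ (m * j) * qbinom (q ^ k) (2 * n + 1) j) /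
          ∏ i ∈ Finset.range (n + 1), (1 - q ^ (2 * i + 1)))
      (𝓝[≠] (1 : ℝ)) (𝓝 ((m : ℝ) * (k : ℝ) ^ n)) :=
  stmt19_general k m n
end
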